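/- Let Γ_3 = ⟨t_1, t_2, s_1, s_2, s_3 | s_1^2, s_2^2, s_3^2, [t_1,t_2]s_3^{-1}s_2^{-1}s_1^{-1}⟩ be the Fuchsian group of signature (1; 2,2,2). Let ρ_1, ρ_2 : Γ_3 → A_4 be homomorphisms agreeing on s_1, s_2, s_3, with ρ_1(t_1) = (1 3)(2 4), ρ_2(t_1) = Id, ρ_1(t_2) = (1 4)(2 3), ρ_2(t_2) = (1 3)(2 4). Then the subgroup Γ_4 = {γ ∈ Γ_3 : ρ_1(γ) = ρ_2(γ)} has index 4 in Γ_3, and contains t_1^2, t_2^2 and all s_j. -/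
import Mathlib


open Equiv FreeGroup

/-- Relators of `Γ₃ = Δ(1; 2,2,2) = ⟨t₁,t₂,s₁,s₂,s₃ | s₁², s₂², s₃², [t₁,t₂]s₃⁻¹s₂⁻¹s₁⁻¹⟩`,
generators indexed by `Fin 5` (`0 = t₁`, `1 = t₂`, `2 = s₁`, `3 = s₂`, `4 = s₃`). -/
def gamma3Rels : Set (FreeGroup (Fin 5)) :=
  {of 2 ^ 2, of 3 ^ 2, of 4 ^ 2,
    of 0 * of 1 * (of 0)⁻¹ * (of 1)⁻¹ * (of 4)⁻¹ * (of 3)⁻¹ * (of 2)⁻¹}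

/-- The equalizer `{γ : ρ₁(γ) = ρ₂(γ)}` of two group homomorphisms, as a subgroup. -/
def eqLocusSubgroup {G H : Type*} [Group G] [Group H] (ρ₁ ρ₂ : G →* H) : Subgroup G where
  carrier := {γ | ρ₁ γ = ρ₂ γ}
  one_mem' := by simp
  mul_mem' := by
    intro a b ha hb
    simp only [Set.mem_setOf_eq] at *
    rw [_root_.map_mul, _root_.map_mul, ha, hb]
  inv_mem' := by
    intro a ha
    simp only [Set.mem_setOf_eq] at *
    rw [_root_.map_inv, _root_.map_inv, ha]

/-- `(1 3)(2 4)` (zero-based). -/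
def pA : Perm (Fin 4) := c[(0 : Fin 4), 2] * c[(1 : Fin 4), 3]

/-- `(1 4)(2 3)` (zero-based). -/
def pB : Perm (Fin 4) := c[(0 : Fin 4), 3] * c[(1 : Fin 4), 2]

/-- Membership in the Klein four-subgroup `{1, pA, pB, pA pB}`. -/
def VKp (v : Perm (Fin 4)) : Prop := v = 1 ∨ v = pA ∨ v = pB ∨ v = pA * pB

instance : DecidablePred VKp := fun v => by unfold VKp; infer_instance

lemma vk_conj : ∀ x v : Perm (Fin 4), VKp v → VKp (x * v * x⁻¹) := by decide

lemma vk_mul : ∀ u v : Perm (Fin 4), VKp u → VKp v → VKp (u * v) := by decide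

lemma vk_inv : ∀ v : Perm (Fin 4), VKp v → VKp v⁻¹ := by decide

/-- Representative values of the coset invariant. -/
def vkVal : Fin 4 → Perm (Fin 4) := ![1, pA, pB * pA⁻¹, pA * pB * pA⁻¹]

lemma vkVal_inj : Function.Injective vkVal := by decide

lemma pA_sq : pA * pA = 1 := by decide
lemma pB_sq : pB * pB = 1 := by decide
lemma vk_val2 : pB * pA⁻¹ = pA * pB := by decide
lemma vk_val3 : pA * pB * pA⁻¹ = pB := by decide

/-- Let `ρ₁, ρ₂ : Γ₃ → A₄` (realized in `Perm (Fin 4)`, letters shifted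
down by one) agree on `s₁, s₂, s₃` and satisfy `ρ₁(t₁) = (1 3)(2 4)`, `ρ₂(t₁) = Id`,
`ρ₁(t₂) = (1 4)(2 3)`, `ρ₂(t₂) = (1 3)(2 4)`.  Then
`Γ₄ = {γ ∈ Γ₃ : ρ₁(γ) = ρ₂(γ)}` has index 4 in `Γ₃` and contains `t₁²`, `t₂²`, and each
`sⱼ`. -/
theorem stmt11
    (ρ₁ ρ₂ : PresentedGroup gamma3Rels →* Equiv.Perm (Fin 4))
    (ht1a : ρ₁ (PresentedGroup.of 0) = c[(0 : Fin 4), 2] * c[(1 : Fin 4), 3])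
    (ht1b : ρ₂ (PresentedGroup.of 0) = 1)
    (ht2a : ρ₁ (PresentedGroup.of 1) = c[(0 : Fin 4), 3] * c[(1 : Fin 4), 2])
    (ht2b : ρ₂ (PresentedGroup.of 1) = c[(0 : Fin 4), 2] * c[(1 : Fin 4), 3])
    (hs : ∀ j : Fin 5, 2 ≤ j → ρ₁ (PresentedGroup.of j) = ρ₂ (PresentedGroup.of j)) :
    (eqLocusSubgroup ρ₁ ρ₂).index = 4 ∧
    (PresentedGroup.of 0) ^ 2 ∈ eqLocusSubgroup ρ₁ ρ₂ ∧
    (PresentedGroup.of 1) ^ 2 ∈ eqLocusSubgroup ρ₁ ρ₂ ∧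
    ∀ j : Fin 5, 2 ≤ j → PresentedGroup.of j ∈ eqLocusSubgroup ρ₁ ρ₂ := by
  have ht1a' : ρ₁ (PresentedGroup.of 0) = pA := ht1a
  have ht2a' : ρ₁ (PresentedGroup.of 1) = pB := ht2a
  have ht2b' : ρ₂ (PresentedGroup.of 1) = pA := ht2b
  have hmem : ∀ γ, γ ∈ eqLocusSubgroup ρ₁ ρ₂ ↔ ρ₁ γ = ρ₂ γ := fun γ => Iff.rfl
  -- the (non-homomorphic) coset invariant
  set g : PresentedGroup gamma3Rels → Perm (Fin 4) := fun γ => ρ₁ γ * (ρ₂ γ)⁻¹ with hg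
  have gmul : ∀ x y, g (x * y) = ρ₁ x * g y * (ρ₁ x)⁻¹ * g x := by
    intro x y
    simp only [hg, _root_.map_mul, mul_inv_rev]
    group
  have ginv : ∀ x, g x⁻¹ = (ρ₁ x)⁻¹ * (g x)⁻¹ * ρ₁ x := by
    intro x
    simp only [hg, _root_.map_inv, mul_inv_rev, inv_inv]
    group
  -- the set of elements with invariant in the Klein group is a subgroup containing all
  -- generators, hence everything
  have key : ∀ γ, VKp (g γ) := by
    let S : Subgroup (PresentedGroup gamma3Rels) :=
      { carrier := {γ | VKp (g γ)}
        one_mem' := by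
          show VKp (g 1)
          simp only [hg, _root_.map_one, inv_one, mul_one]
          exact Or.inl rfl
        mul_mem' := by
          intro x y hx hy
          simp only [Set.mem_setOf_eq] at *
          rw [gmul]
          exact vk_mul _ _ (vk_conj _ _ hy) hx
        inv_mem' := by
          intro x hx
          simp only [Set.mem_setOf_eq] at *
          rw [ginv]
          have := vk_conj (ρ₁ x)⁻¹ _ (vk_inv _ hx)
          simpa using this }
    have hgen : Subgroup.closure (Set.range (PresentedGroup.of (rels := gamma3Rels))) ≤ S := by
      rw [Subgroup.closure_le]
      rintro x ⟨i, rfl⟩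
      show VKp (g (PresentedGroup.of i))
      fin_cases i
      · show VKp (ρ₁ (PresentedGroup.of 0) * (ρ₂ (PresentedGroup.of 0))⁻¹)
        rw [ht1a', ht1b, inv_one, mul_one]
        exact Or.inr (Or.inl rfl)
      · show VKp (ρ₁ (PresentedGroup.of 1) * (ρ₂ (PresentedGroup.of 1))⁻¹)
        rw [ht2a', ht2b', vk_val2]
        exact Or.inr (Or.inr (Or.inr rfl))
      · show VKp (ρ₁ (PresentedGroup.of 2) * (ρ₂ (PresentedGroup.of 2))⁻¹)
        rw [hs 2 (by decide), mul_inv_cancel]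
        exact Or.inl rfl
      · show VKp (ρ₁ (PresentedGroup.of 3) * (ρ₂ (PresentedGroup.of 3))⁻¹)
        rw [hs 3 (by decide), mul_inv_cancel]
        exact Or.inl rfl
      · show VKp (ρ₁ (PresentedGroup.of 4) * (ρ₂ (PresentedGroup.of 4))⁻¹)
        rw [hs 4 (by decide), mul_inv_cancel]
        exact Or.inl rfl
    intro γ
    have : γ ∈ Subgroup.closure (Set.range (PresentedGroup.of (rels := gamma3Rels))) := by
      rw [PresentedGroup.closure_range_of]
      trivial
    exact hgen this
  -- cosets are classified by the invariant
  have coset_iff : ∀ x y : PresentedGroup gamma3Rels,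
      (QuotientGroup.mk x : _ ⧸ eqLocusSubgroup ρ₁ ρ₂) = QuotientGroup.mk y ↔ g x = g y := by
    intro x y
    rw [QuotientGroup.eq, hmem, _root_.map_mul, _root_.map_mul, _root_.map_inv, _root_.map_inv]
    constructor
    · intro h
      have := congrArg (fun z => ρ₁ x * z * (ρ₂ y)⁻¹) h
      simpa [hg, mul_assoc] using this.symm
    · intro h
      have := congrArg (fun z => (ρ₁ x)⁻¹ * z * ρ₂ y) h
      simpa [hg, mul_assoc] using this.symm
  -- explicit transversal
  let rep : Fin 4 → PresentedGroup gamma3Rels :=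
    ![1, PresentedGroup.of 0, PresentedGroup.of 1, PresentedGroup.of 0 * PresentedGroup.of 1]
  have hrep : ∀ i, g (rep i) = vkVal i := by
    intro i
    fin_cases i
    · simp [hg, rep, vkVal]
    · simp [hg, rep, vkVal, ht1a', ht1b]
    · simp [hg, rep, vkVal, ht2a', ht2b']
    · simp [hg, rep, vkVal, _root_.map_mul, ht1a', ht1b, ht2a', ht2b', mul_inv_rev]
  let e : Fin 4 → (PresentedGroup gamma3Rels ⧸ eqLocusSubgroup ρ₁ ρ₂) :=
    fun i => QuotientGroup.mk (rep i)
  have he : Function.Bijective e := by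
    constructor
    · intro i j h
      apply vkVal_inj
      rw [← hrep, ← hrep]
      exact (coset_iff _ _).mp h
    · intro q
      obtain ⟨x, rfl⟩ := QuotientGroup.mk_surjective q
      rcases key x with h | h | h | h
      · exact ⟨0, (coset_iff (rep 0) x).mpr (by rw [hrep, h]; decide)⟩
      · exact ⟨1, (coset_iff (rep 1) x).mpr (by rw [hrep, h]; decide)⟩
      · exact ⟨3, (coset_iff (rep 3) x).mpr (by rw [hrep, h]; decide)⟩
      · exact ⟨2, (coset_iff (rep 2) x).mpr (by rw [hrep, h]; decide)⟩
  refine ⟨?_, ?_, ?_, ?_⟩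
  · rw [Subgroup.index_eq_card, ← Nat.card_eq_of_bijective e he, Nat.card_eq_fintype_card,
      Fintype.card_fin]
  · rw [hmem, _root_.map_pow, _root_.map_pow, ht1a', ht1b, sq, sq, pA_sq, one_mul]
  · rw [hmem, _root_.map_pow, _root_.map_pow, ht2a', ht2b', sq, sq, pA_sq, pB_sq]
  · intro j hj
    exact (hmem _).mpr (hs j hj)
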